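/- arXiv:2401.05599 — 5 statements merged into one kernel-verified Lean document; each statement's English description precedes it below -/
import Mathlib

section
/- Assume ρw ≤ ρn and δn ≤ δw. Then for all x ≥ 0, y ≥ 0 with x + y > 0, the total growth rate satisfies F₁(x,y) + F₂(x,y) ≤ (x+y)·(ρn·exp(−σ·(x+y)) − δn). Consequently, if additionally Q_x > 1 and x + y > (1/σ)·ln Q_x, then F₁(x,y) + F₂(x,y) < 0; in particular the set Ω = {(x,y) ∈ ℝ₊² : x + y ≤ (1/σ)·ln Q_x} is an absorbing (forward invariant, attracting) region for the total population x + y. -/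
/-!
Adding the two components, the transfer terms `ω y` cancel and the two birth terms of `y`
recombine into `ρw y`, so `ν` and `ω` drop out. Replacing `ρw` by `ρn`, `δw` by `δn` and the
reduced fertility `(x + (1 - η) y) / (x + y) ≤ 1` by `1` bounds the total rate by the
logistic-type rate `(x + y) (ρn e^{-σ(x+y)} - δn)`, which is negative once
`ρn e^{-σ(x+y)} < δn`, i.e. once `x + y > ln(ρn / δn) / σ`.
-/

/-- First component of the uncontrolled vector field. -/
noncomputable def F1 (ρn ρw δn σ ν η ω : ℝ) (x y : ℝ) : ℝ :=
  (ρn * x * (x + (1 - η) * y) / (x + y) + (1 - ν) * ρw * y) * Real.exp (-σ * (x + y))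
    + ω * y - δn * x

/-- Second component of the uncontrolled vector field. -/
noncomputable def F2 (ρw δw σ ν ω : ℝ) (x y : ℝ) : ℝ :=
  ν * ρw * y * Real.exp (-σ * (x + y)) - ω * y - δw * y

open Real

theorem F1_add_F2 (ρn ρw δn δw σ ν η ω x y : ℝ) :
    F1 ρn ρw δn σ ν η ω x y + F2 ρw δw σ ν ω x y
      = (ρn * x * (x + (1 - η) * y) / (x + y) + ρw * y) * exp (-σ * (x + y))
        - δn * x - δw * y := by
  unfold F1 F2
  ring

theorem mul_div_le_self_of_le {a b c : ℝ} (ha : 0 ≤ a) (hbc : b ≤ c) (hc : 0 < c) :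
    a * b / c ≤ a := by
  rw [mul_div_assoc]
  exact mul_le_of_le_one_right ha ((div_le_one hc).2 hbc)

theorem F1_add_F2_le {ρn ρw δn δw σ η : ℝ} (ν ω : ℝ) (hρn : 0 ≤ ρn) (hη : 0 ≤ η)
    (hρ : ρw ≤ ρn) (hδ : δn ≤ δw) {x y : ℝ} (hx : 0 ≤ x) (hy : 0 ≤ y)
    (hxy : 0 < x + y) :
    F1 ρn ρw δn σ ν η ω x y + F2 ρw δw σ ν ω x y
      ≤ (x + y) * (ρn * exp (-σ * (x + y)) - δn) := by
  have hfert : ρn * x * (x + (1 - η) * y) / (x + y) ≤ ρn * x :=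
    mul_div_le_self_of_le (by positivity) (by nlinarith) hxy
  have hbirth : (ρn * x * (x + (1 - η) * y) / (x + y) + ρw * y) * exp (-σ * (x + y))
      ≤ (ρn * x + ρn * y) * exp (-σ * (x + y)) := by
    gcongr
  rw [F1_add_F2]
  linarith [mul_le_mul_of_nonneg_right hδ hy]

theorem mul_exp_neg_mul_lt {ρ δ σ s : ℝ} (hρ : 0 < ρ) (hδ : 0 < δ) (hσ : 0 < σ)
    (hs : 1 / σ * log (ρ / δ) < s) : ρ * exp (-σ * s) < δ := by
  have hlog : log (ρ / δ) < σ * s := by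
    rwa [one_div_mul_eq_div, div_lt_iff₀' hσ] at hs
  have hexp : ρ < δ * exp (σ * s) := by
    rwa [log_lt_iff_lt_exp (by positivity), div_lt_iff₀' hδ] at hlog
  rwa [neg_mul, exp_neg, ← div_eq_mul_inv, div_lt_iff₀ (exp_pos _)]

theorem total_population_dissipative_general
    (ρn ρw δn δw σ ν η ω : ℝ)
    (hρn : 0 < ρn) (hδn : 0 < δn) (hσ : 0 < σ)
    (hη0 : 0 ≤ η)
    (hρ : ρw ≤ ρn) (hδ : δn ≤ δw) :
    (∀ x y : ℝ, 0 ≤ x → 0 ≤ y → 0 < x + y →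
      F1 ρn ρw δn σ ν η ω x y + F2 ρw δw σ ν ω x y
        ≤ (x + y) * (ρn * Real.exp (-σ * (x + y)) - δn)) ∧
    (ρn / δn > 1 →
      ∀ x y : ℝ, 0 ≤ x → 0 ≤ y → (1 / σ) * Real.log (ρn / δn) < x + y →
        F1 ρn ρw δn σ ν η ω x y + F2 ρw δw σ ν ω x y < 0) := by
  refine ⟨fun x y hx hy hxy => F1_add_F2_le ν ω hρn.le hη0 hρ hδ hx hy hxy,
    fun hQ x y hx hy hs => ?_⟩
  have hxy : 0 < x + y := lt_of_le_of_lt (by have := log_pos hQ; positivity) hs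
  calc F1 ρn ρw δn σ ν η ω x y + F2 ρw δw σ ν ω x y
      ≤ (x + y) * (ρn * exp (-σ * (x + y)) - δn) :=
        F1_add_F2_le ν ω hρn.le hη0 hρ hδ hx hy hxy
    _ < 0 := mul_neg_of_pos_of_neg hxy (sub_neg.2 (mul_exp_neg_mul_lt hρn hδn hσ hs))

/-- under ρw ≤ ρn and δn ≤ δw, the total growth rate satisfies
F₁+F₂ ≤ (x+y)·(ρn·exp(−σ(x+y)) − δn) on the positive quadrant; consequently,
if Q_x > 1 and x+y > (1/σ)·ln Q_x, then F₁+F₂ < 0 (so Ω is absorbing for the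
total population). -/
theorem total_population_dissipative
    (ρn ρw δn δw σ ν η ω : ℝ)
    (hρn : 0 < ρn) (hρw : 0 < ρw) (hδn : 0 < δn) (hδw : 0 < δw) (hσ : 0 < σ)
    (hν0 : 0 ≤ ν) (hν1 : ν ≤ 1) (hη0 : 0 ≤ η) (hη1 : η ≤ 1) (hω : 0 ≤ ω)
    (hρ : ρw ≤ ρn) (hδ : δn ≤ δw) :
    (∀ x y : ℝ, 0 ≤ x → 0 ≤ y → 0 < x + y →
      F1 ρn ρw δn σ ν η ω x y + F2 ρw δw σ ν ω x y
        ≤ (x + y) * (ρn * Real.exp (-σ * (x + y)) - δn)) ∧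
    (ρn / δn > 1 →
      ∀ x y : ℝ, 0 ≤ x → 0 ≤ y → (1 / σ) * Real.log (ρn / δn) < x + y →
        F1 ρn ρw δn σ ν η ω x y + F2 ρw δw σ ν ω x y < 0) :=
  total_population_dissipative_general ρn ρw δn δw σ ν η ω hρn hδn hσ hη0 hρ hδ
end

section
/- Assume Q_y > 1 and set h = (1/σ)·ln Q_y. Then for every x ∈ ℝ, the equilibrium condition F₁(x, h − x) = 0 holds if and only if x satisfies the quadratic equation η·Q_x·x² − Q_x·(Q_c − 1)·h·x + Q_{y,x}·h² = 0. -/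
open Real

section CoexistenceLine

variable {ρn ρw δn σ ν η ω h Q : ℝ}

theorem exp_neg_mul_one_div_mul_log (hσ : σ ≠ 0) (hQ : 0 < Q) :
    exp (-σ * ((1 / σ) * log Q)) = Q⁻¹ := by
  rw [show -σ * ((1 / σ) * log Q) = -log Q by field_simp, exp_neg, exp_log hQ]

theorem mul_F1_sub_eq (hh : h ≠ 0) (hQ : Q ≠ 0) (hE : exp (-σ * h) = Q⁻¹) (x : ℝ) :
    h * Q * F1 ρn ρw δn σ ν η ω x (h - x) =
      η * ρn * x ^ 2 + ((1 - η) * ρn - (1 - ν) * ρw - ω * Q - δn * Q) * h * x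
        + ((1 - ν) * ρw + ω * Q) * h ^ 2 := by
  unfold F1
  rw [add_sub_cancel, hE]
  field_simp
  ring

theorem mul_coexistence_quadratic (hρn : ρn ≠ 0) (hδn : δn ≠ 0) (x : ℝ) :
    δn * (η * (ρn / δn) * x ^ 2
        - (ρn / δn) * ((((1 - ν) * ρw + ω * Q) / δn + Q + η * (ρn / δn)) / (ρn / δn) - 1)
          * h * x
        + (((1 - ν) * ρw + ω * Q) / δn) * h ^ 2) =
      η * ρn * x ^ 2 + ((1 - η) * ρn - (1 - ν) * ρw - ω * Q - δn * Q) * h * x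
        + ((1 - ν) * ρw + ω * Q) * h ^ 2 := by
  field_simp
  ring

end CoexistenceLine

theorem coexistence_equilibria_quadratic_general
    (ρn ρw δn δw σ ν η ω : ℝ)
    (hρn : 0 < ρn) (hδn : 0 < δn) (hσ : 0 < σ)
    (hQy : ν * ρw / (ω + δw) > 1) :
    ∀ x : ℝ,
      (F1 ρn ρw δn σ ν η ω x ((1 / σ) * Real.log (ν * ρw / (ω + δw)) - x) = 0 ↔
        η * (ρn / δn) * x ^ 2
          - (ρn / δn) *
              ((((1 - ν) * ρw + ω * (ν * ρw / (ω + δw))) / δn + ν * ρw / (ω + δw)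
                  + η * (ρn / δn)) / (ρn / δn) - 1) *
              ((1 / σ) * Real.log (ν * ρw / (ω + δw))) * x
          + (((1 - ν) * ρw + ω * (ν * ρw / (ω + δw))) / δn) *
              ((1 / σ) * Real.log (ν * ρw / (ω + δw))) ^ 2 = 0) := by
  intro x
  set Qy := ν * ρw / (ω + δw)
  have hQy0 : 0 < Qy := one_pos.trans hQy
  have hh : (1 / σ) * log Qy ≠ 0 := (mul_pos (by positivity) (log_pos hQy)).ne'
  rw [← mul_eq_zero_iff_left (mul_ne_zero hh hQy0.ne'),
    mul_F1_sub_eq hh hQy0.ne' (exp_neg_mul_one_div_mul_log hσ.ne' hQy0),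
    ← mul_coexistence_quadratic hρn.ne' hδn.ne', mul_eq_zero_iff_left hδn.ne']

/-- with h = (1/σ)·ln Q_y (Q_y > 1), F₁(x, h−x) = 0 iff x solves
the quadratic η·Q_x·x² − Q_x·(Q_c − 1)·h·x + Q_{y,x}·h² = 0. -/
theorem coexistence_equilibria_quadratic
    (ρn ρw δn δw σ ν η ω : ℝ)
    (hρn : 0 < ρn) (hρw : 0 < ρw) (hδn : 0 < δn) (hδw : 0 < δw) (hσ : 0 < σ)
    (hν0 : 0 ≤ ν) (hν1 : ν ≤ 1) (hη0 : 0 ≤ η) (hη1 : η ≤ 1) (hω : 0 ≤ ω)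
    (hQy : ν * ρw / (ω + δw) > 1) :
    ∀ x : ℝ,
      (F1 ρn ρw δn σ ν η ω x ((1 / σ) * Real.log (ν * ρw / (ω + δw)) - x) = 0 ↔
        η * (ρn / δn) * x ^ 2
          - (ρn / δn) *
              ((((1 - ν) * ρw + ω * (ν * ρw / (ω + δw))) / δn + ν * ρw / (ω + δw)
                  + η * (ρn / δn)) / (ρn / δn) - 1) *
              ((1 / σ) * Real.log (ν * ρw / (ω + δw))) * x
          + (((1 - ν) * ρw + ω * (ν * ρw / (ω + δw))) / δn) *
              ((1 / σ) * Real.log (ν * ρw / (ω + δw))) ^ 2 = 0) :=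
  coexistence_equilibria_quadratic_general ρn ρw δn δw σ ν η ω hρn hδn hσ hQy
end

section
/- Assume Q_y > 1, η > 0, and D := (Q_c − 1)² − 4·η·Q_{y,x}/Q_x ≥ 0. Set h = (1/σ)·ln Q_y, x_u = (h/(2η))·((Q_c − 1) + √D), y_u = h − x_u, x_s = (h/(2η))·((Q_c − 1) − √D), y_s = h − x_s. Then both (x_u, y_u) and (x_s, y_s) are equilibria of the uncontrolled system: F₁(x_u, y_u) = F₂(x_u, y_u) = 0 and F₁(x_s, y_s) = F₂(x_s, y_s) = 0. -/
open Real

theorem homogeneous_quadratic_eq_zero {a b c h x : ℝ} (ha : a ≠ 0) (hD : 0 ≤ b ^ 2 - 4 * a * c)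
    (hx : x = h / (2 * a) * (b + √(b ^ 2 - 4 * a * c)) ∨
      x = h / (2 * a) * (b - √(b ^ 2 - 4 * a * c))) :
    a * x ^ 2 - b * h * x + c * h ^ 2 = 0 := by
  have hdiscrim : discrim a (-(b * h)) (c * h ^ 2) =
      (h * √(b ^ 2 - 4 * a * c)) * (h * √(b ^ 2 - 4 * a * c)) := by
    rw [discrim]
    linear_combination (-h ^ 2) * mul_self_sqrt hD
  have hroot := (quadratic_eq_zero_iff ha hdiscrim x).mpr <| by
    rcases hx with rfl | rfl
    · left; field_simp
    · right; field_simp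
  linear_combination hroot

section Equilibria

variable {ρn ρw δn δw σ ν η ω Qx Qy Qyx Qc h x y : ℝ}

theorem F2_eq_zero_of_add_eq (hQy : Qy = ν * ρw / (ω + δw)) (hQy0 : Qy ≠ 0)
    (hxy : x + y = h) (hexp : exp (-σ * h) = Qy⁻¹) :
    F2 ρw δw σ ν ω x y = 0 := by
  have hνρw : ν * ρw ≠ 0 := fun h0 ↦ hQy0 (by rw [hQy, h0, zero_div])
  have hbalance : ν * ρw * Qy⁻¹ = ω + δw := by
    rw [hQy, inv_div, mul_div_cancel₀ _ hνρw]
  rw [F2, hxy, hexp]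
  linear_combination y * hbalance

theorem F1_eq_zero_of_quadratic (hρn : ρn ≠ 0) (hδn : δn ≠ 0) (hQy0 : Qy ≠ 0) (hh : h ≠ 0)
    (hQx : Qx = ρn / δn) (hQyx : Qyx = ((1 - ν) * ρw + ω * Qy) / δn)
    (hQc : Qc = (Qyx + Qy + η * Qx) / Qx)
    (hxy : x + y = h) (hexp : exp (-σ * h) = Qy⁻¹)
    (hquad : η * x ^ 2 - (Qc - 1) * h * x + Qyx / Qx * h ^ 2 = 0) :
    F1 ρn ρw δn σ ν η ω x y = 0 := by
  have hQx0 : Qx ≠ 0 := by rw [hQx]; exact div_ne_zero hρn hδn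
  have hy : y = h - x := by linear_combination hxy
  have hscaled : F1 ρn ρw δn σ ν η ω x y * (h * Qy) =
      δn * Qx * (η * x ^ 2 - (Qc - 1) * h * x + Qyx / Qx * h ^ 2) := by
    rw [F1, hxy, hexp, hQc, hQyx, hQx, hy]
    field_simp
    ring
  rw [hquad, mul_zero] at hscaled
  exact (mul_eq_zero.mp hscaled).resolve_right (mul_ne_zero hh hQy0)

end Equilibria

theorem coexistence_points_are_equilibria_general
    (ρn ρw δn δw σ ν η ω : ℝ)
    (hρn : 0 < ρn) (hδn : 0 < δn) (hσ : 0 < σ)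
    (hη0 : 0 < η)
    (Qx Qy Qyx Qc h D xu yu xs ys : ℝ)
    (hQxdef : Qx = ρn / δn)
    (hQydef : Qy = ν * ρw / (ω + δw))
    (hQyxdef : Qyx = ((1 - ν) * ρw + ω * Qy) / δn)
    (hQcdef : Qc = (Qyx + Qy + η * Qx) / Qx)
    (hQy : Qy > 1)
    (hhdef : h = (1 / σ) * Real.log Qy)
    (hDdef : D = (Qc - 1) ^ 2 - 4 * η * Qyx / Qx)
    (hD : 0 ≤ D)
    (hxu : xu = (h / (2 * η)) * ((Qc - 1) + Real.sqrt D)) (hyu : yu = h - xu)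
    (hxs : xs = (h / (2 * η)) * ((Qc - 1) - Real.sqrt D)) (hys : ys = h - xs) :
    F1 ρn ρw δn σ ν η ω xu yu = 0 ∧ F2 ρw δw σ ν ω xu yu = 0 ∧
    F1 ρn ρw δn σ ν η ω xs ys = 0 ∧ F2 ρw δw σ ν ω xs ys = 0 := by
  have hQy0 : 0 < Qy := by linarith
  have hh : h ≠ 0 := by
    have := log_pos hQy
    rw [hhdef]
    positivity
  have hexp : exp (-σ * h) = Qy⁻¹ := by
    rw [hhdef, show -σ * (1 / σ * log Qy) = -log Qy by field_simp, exp_neg, exp_log hQy0]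
  rw [mul_div_assoc] at hDdef
  have equilibrium : ∀ x y, y = h - x →
      (x = h / (2 * η) * ((Qc - 1) + √D) ∨ x = h / (2 * η) * ((Qc - 1) - √D)) →
      F1 ρn ρw δn σ ν η ω x y = 0 ∧ F2 ρw δw σ ν ω x y = 0 := fun x y hy hx ↦
    ⟨F1_eq_zero_of_quadratic hρn.ne' hδn.ne' hQy0.ne' hh hQxdef hQyxdef hQcdef
        (by rw [hy]; ring) hexp
        (homogeneous_quadratic_eq_zero hη0.ne' (hDdef ▸ hD) (hDdef ▸ hx)),
      F2_eq_zero_of_add_eq hQydef hQy0.ne' (by rw [hy]; ring) hexp⟩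
  obtain ⟨hF1u, hF2u⟩ := equilibrium xu yu hyu (.inl hxu)
  obtain ⟨hF1s, hF2s⟩ := equilibrium xs ys hys (.inr hxs)
  exact ⟨hF1u, hF2u, hF1s, hF2s⟩

/-- when Q_y > 1, η > 0 and the discriminant
D = (Q_c−1)² − 4ηQ_{y,x}/Q_x is nonnegative, the two points (x_u, y_u) and
(x_s, y_s) given by the quadratic formula are equilibria of the uncontrolled
system. -/
theorem coexistence_points_are_equilibria
    (ρn ρw δn δw σ ν η ω : ℝ)
    (hρn : 0 < ρn) (hρw : 0 < ρw) (hδn : 0 < δn) (hδw : 0 < δw) (hσ : 0 < σ)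
    (hν0 : 0 ≤ ν) (hν1 : ν ≤ 1) (hη0 : 0 < η) (hη1 : η ≤ 1) (hω : 0 ≤ ω)
    (Qx Qy Qyx Qc h D xu yu xs ys : ℝ)
    (hQxdef : Qx = ρn / δn)
    (hQydef : Qy = ν * ρw / (ω + δw))
    (hQyxdef : Qyx = ((1 - ν) * ρw + ω * Qy) / δn)
    (hQcdef : Qc = (Qyx + Qy + η * Qx) / Qx)
    (hQy : Qy > 1)
    (hhdef : h = (1 / σ) * Real.log Qy)
    (hDdef : D = (Qc - 1) ^ 2 - 4 * η * Qyx / Qx)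
    (hD : 0 ≤ D)
    (hxu : xu = (h / (2 * η)) * ((Qc - 1) + Real.sqrt D)) (hyu : yu = h - xu)
    (hxs : xs = (h / (2 * η)) * ((Qc - 1) - Real.sqrt D)) (hys : ys = h - xs) :
    F1 ρn ρw δn σ ν η ω xu yu = 0 ∧ F2 ρw δw σ ν ω xu yu = 0 ∧
    F1 ρn ρw δn σ ν η ω xs ys = 0 ∧ F2 ρw δw σ ν ω xs ys = 0 :=
  coexistence_points_are_equilibria_general ρn ρw δn δw σ ν η ω hρn hδn hσ hη0 Qx Qy Qyx Qc h D xu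
    yu xs ys hQxdef hQydef hQyxdef hQcdef hQy hhdef hDdef hD hxu hyu hxs hys
end

section
/- Assume Q_x > 1 and set x♯ = (1/σ)·ln Q_x. Then the vector field F is Fréchet differentiable at the boundary equilibrium E_x = (x♯, 0), and its derivative there is represented by the upper-triangular matrix [[−δn·ln Q_x, b], [0, ν·ρw/Q_x − (ω + δw)]], where b = −η·δn + (1−ν)·ρw/Q_x − δn·ln Q_x + ω. In particular the eigenvalues of the Jacobian at E_x are −δn·ln Q_x and (ω + δw)·(Q_y − Q_x)/Q_x, and if moreover Q_x > Q_y then both eigenvalues are real and strictly negative (E_x is a nodal attractor of the linearization). -/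
/-- The linear map on ℝ² represented by the upper-triangular matrix
[[a, b], [0, d]]. -/
def upperTriangular (a b d : ℝ) : ℝ × ℝ →ₗ[ℝ] ℝ × ℝ where
  toFun p := (a * p.1 + b * p.2, d * p.2)
  map_add' p q := by
    simp only [Prod.fst_add, Prod.snd_add, Prod.mk_add_mk]
    exact Prod.ext (by ring) (by ring)
  map_smul' c p := by
    simp only [Prod.smul_fst, Prod.smul_snd, Prod.smul_mk, smul_eq_mul,
      RingHom.id_apply]
    exact Prod.ext (by ring) (by ring)

open ContinuousLinearMap

theorem upperTriangular_apply (a b d : ℝ) (p : ℝ × ℝ) :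
    upperTriangular a b d p = (a * p.1 + b * p.2, d * p.2) := rfl

theorem upperTriangular_toContinuousLinearMap (a b d : ℝ) :
    (upperTriangular a b d).toContinuousLinearMap
      = (a • fst ℝ ℝ ℝ + b • snd ℝ ℝ ℝ).prod (d • snd ℝ ℝ ℝ) := by
  ext <;> simp [upperTriangular_apply]

theorem upperTriangular_hasEigenvalue_left (a b d : ℝ) :
    Module.End.HasEigenvalue (upperTriangular a b d) a := by
  refine Module.End.hasEigenvalue_of_hasEigenvector (x := ((1 : ℝ), (0 : ℝ))) ⟨?_, by simp⟩
  rw [Module.End.mem_eigenspace_iff, upperTriangular_apply]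
  simp

theorem upperTriangular_hasEigenvalue_right (a b d : ℝ) :
    Module.End.HasEigenvalue (upperTriangular a b d) d := by
  rcases eq_or_ne a d with rfl | had
  · exact upperTriangular_hasEigenvalue_left a b a
  refine Module.End.hasEigenvalue_of_hasEigenvector (x := (b / (d - a), (1 : ℝ))) ⟨?_, by simp⟩
  rw [Module.End.mem_eigenspace_iff, upperTriangular_apply, Prod.smul_mk, Prod.ext_iff]
  refine ⟨?_, by simp⟩
  simp only [smul_eq_mul]
  field_simp
  ring

section WolbachiaFreeAxis

variable {ρn ρw δn δw σ ν η ω x : ℝ}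

theorem hasFDerivAt_exp_neg_mul_add (σ : ℝ) (p : ℝ × ℝ) :
    HasFDerivAt (fun q : ℝ × ℝ => Real.exp (-σ * (q.1 + q.2)))
      ((-σ * Real.exp (-σ * (p.1 + p.2))) • (fst ℝ ℝ ℝ + snd ℝ ℝ ℝ)) p := by
  have hsum : HasFDerivAt (fun q : ℝ × ℝ => q.1 + q.2) (fst ℝ ℝ ℝ + snd ℝ ℝ ℝ) p :=
    hasFDerivAt_fst.add hasFDerivAt_snd
  exact (hsum.const_mul (-σ)).exp.congr_fderiv (by rw [smul_smul, mul_comm])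

theorem hasFDerivAt_ratio_of_snd_eq_zero (hx : x ≠ 0) :
    HasFDerivAt (fun p : ℝ × ℝ => ρn * p.1 * (p.1 + (1 - η) * p.2) / (p.1 + p.2))
      (ρn • fst ℝ ℝ ℝ - (η * ρn) • snd ℝ ℝ ℝ) (x, 0) := by
  have hfst : HasFDerivAt (fun p : ℝ × ℝ => p.1) (fst ℝ ℝ ℝ) (x, 0) := hasFDerivAt_fst
  have hsnd : HasFDerivAt (fun p : ℝ × ℝ => p.2) (snd ℝ ℝ ℝ) (x, 0) := hasFDerivAt_snd
  have hinv := (hasDerivAt_inv (by simpa using hx)).comp_hasFDerivAt (x, (0 : ℝ)) (hfst.add hsnd)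
  have hnum := (hfst.const_mul ρn).mul (hfst.add (hsnd.const_mul (1 - η)))
  refine (hnum.mul hinv).congr_fderiv ?_ |>.congr_of_eventuallyEq ?_
  · ext <;> simp <;> field_simp <;> ring
  · exact Filter.Eventually.of_forall fun p => by simp [div_eq_mul_inv]

theorem hasFDerivAt_F1_of_snd_eq_zero (hx : x ≠ 0) :
    HasFDerivAt (fun p : ℝ × ℝ => F1 ρn ρw δn σ ν η ω p.1 p.2)
      ((ρn * Real.exp (-σ * x) * (1 - σ * x) - δn) • fst ℝ ℝ ℝ
        + ((-η * ρn + (1 - ν) * ρw - σ * ρn * x) * Real.exp (-σ * x) + ω) • snd ℝ ℝ ℝ)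
      (x, 0) := by
  have hfst : HasFDerivAt (fun p : ℝ × ℝ => p.1) (fst ℝ ℝ ℝ) (x, 0) := hasFDerivAt_fst
  have hsnd : HasFDerivAt (fun p : ℝ × ℝ => p.2) (snd ℝ ℝ ℝ) (x, 0) := hasFDerivAt_snd
  have hgrowth := (hasFDerivAt_ratio_of_snd_eq_zero (ρn := ρn) (η := η) hx).add
    (hsnd.const_mul ((1 - ν) * ρw))
  refine (((hgrowth.mul (hasFDerivAt_exp_neg_mul_add σ _)).add (hsnd.const_mul ω)).sub
    (hfst.const_mul δn)).congr_fderiv ?_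
  ext <;> simp <;> field_simp <;> ring

theorem hasFDerivAt_F2_of_snd_eq_zero :
    HasFDerivAt (fun p : ℝ × ℝ => F2 ρw δw σ ν ω p.1 p.2)
      ((ν * ρw * Real.exp (-σ * x) - ω - δw) • snd ℝ ℝ ℝ) (x, 0) := by
  have hsnd : HasFDerivAt (fun p : ℝ × ℝ => p.2) (snd ℝ ℝ ℝ) (x, 0) := hasFDerivAt_snd
  refine ((((hsnd.const_mul (ν * ρw)).mul (hasFDerivAt_exp_neg_mul_add σ _)).sub
    (hsnd.const_mul ω)).sub (hsnd.const_mul δw)).congr_fderiv ?_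
  ext <;> simp [mul_comm]

theorem hasFDerivAt_of_snd_eq_zero (hx : x ≠ 0) :
    HasFDerivAt
      (fun p : ℝ × ℝ => (F1 ρn ρw δn σ ν η ω p.1 p.2, F2 ρw δw σ ν ω p.1 p.2))
      ((upperTriangular (ρn * Real.exp (-σ * x) * (1 - σ * x) - δn)
          ((-η * ρn + (1 - ν) * ρw - σ * ρn * x) * Real.exp (-σ * x) + ω)
          (ν * ρw * Real.exp (-σ * x) - ω - δw)).toContinuousLinearMap)
      (x, 0) := by
  rw [upperTriangular_toContinuousLinearMap]
  exact (hasFDerivAt_F1_of_snd_eq_zero hx).prodMk hasFDerivAt_F2_of_snd_eq_zero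

theorem hasFDerivAt_at_wolbachiaFreeEquilibrium (hσ : σ ≠ 0) (hQ : 1 < ρn / δn) :
    HasFDerivAt
      (fun p : ℝ × ℝ => (F1 ρn ρw δn σ ν η ω p.1 p.2, F2 ρw δw σ ν ω p.1 p.2))
      ((upperTriangular (-δn * Real.log (ρn / δn))
          (-η * δn + (1 - ν) * ρw / (ρn / δn) - δn * Real.log (ρn / δn) + ω)
          (ν * ρw / (ρn / δn) - (ω + δw))).toContinuousLinearMap)
      ((1 / σ) * Real.log (ρn / δn), 0) := by
  have hQ0 : 0 < ρn / δn := one_pos.trans hQ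
  have hρn : ρn ≠ 0 := fun h => by simp [h] at hQ0
  have hσx : σ * (1 / σ * Real.log (ρn / δn)) = Real.log (ρn / δn) := by field_simp
  have hexp : Real.exp (-σ * (1 / σ * Real.log (ρn / δn))) = δn / ρn := by
    rw [neg_mul, hσx, Real.exp_neg, Real.exp_log hQ0, inv_div]
  have key := hasFDerivAt_of_snd_eq_zero (ρn := ρn) (ρw := ρw) (δn := δn) (δw := δw) (σ := σ)
    (ν := ν) (η := η) (ω := ω) (mul_ne_zero (one_div_ne_zero hσ) (Real.log_pos hQ).ne')
  rw [hexp, mul_right_comm σ ρn, hσx] at key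
  convert key using 3 <;> field_simp <;> ring

end WolbachiaFreeAxis

theorem jacobian_at_wolbachia_free_equilibrium_general
    (ρn ρw δn δw σ ν η ω : ℝ)
    (hδn : 0 < δn) (hδw : 0 < δw) (hσ : 0 < σ)
    (hω : 0 ≤ ω)
    (hQx : ρn / δn > 1) :
    HasFDerivAt
      (fun p : ℝ × ℝ => (F1 ρn ρw δn σ ν η ω p.1 p.2, F2 ρw δw σ ν ω p.1 p.2))
      ((upperTriangular (-δn * Real.log (ρn / δn))
          (-η * δn + (1 - ν) * ρw / (ρn / δn) - δn * Real.log (ρn / δn) + ω)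
          (ν * ρw / (ρn / δn) - (ω + δw))).toContinuousLinearMap)
      ((1 / σ) * Real.log (ρn / δn), 0) ∧
    Module.End.HasEigenvalue
      (upperTriangular (-δn * Real.log (ρn / δn))
        (-η * δn + (1 - ν) * ρw / (ρn / δn) - δn * Real.log (ρn / δn) + ω)
        (ν * ρw / (ρn / δn) - (ω + δw)))
      (-δn * Real.log (ρn / δn)) ∧
    Module.End.HasEigenvalue
      (upperTriangular (-δn * Real.log (ρn / δn))
        (-η * δn + (1 - ν) * ρw / (ρn / δn) - δn * Real.log (ρn / δn) + ω)
        (ν * ρw / (ρn / δn) - (ω + δw)))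
      ((ω + δw) * (ν * ρw / (ω + δw) - ρn / δn) / (ρn / δn)) ∧
    (ρn / δn > ν * ρw / (ω + δw) →
      -δn * Real.log (ρn / δn) < 0 ∧
      (ω + δw) * (ν * ρw / (ω + δw) - ρn / δn) / (ρn / δn) < 0) := by
  have hQ : 0 < ρn / δn := one_pos.trans hQx
  have hωδ : 0 < ω + δw := by linarith
  have hd : (ω + δw) * (ν * ρw / (ω + δw) - ρn / δn) / (ρn / δn)
      = ν * ρw / (ρn / δn) - (ω + δw) := by
    rw [mul_sub, mul_div_cancel₀ _ hωδ.ne', sub_div, mul_div_cancel_right₀ _ hQ.ne']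
  refine ⟨hasFDerivAt_at_wolbachiaFreeEquilibrium hσ.ne' hQx,
    upperTriangular_hasEigenvalue_left _ _ _, hd ▸ upperTriangular_hasEigenvalue_right _ _ _,
    fun hQy => ⟨?_, ?_⟩⟩
  · have := mul_pos hδn (Real.log_pos hQx)
    linarith
  · exact div_neg_of_neg_of_pos (mul_neg_of_pos_of_neg hωδ (sub_neg.2 hQy)) hQ

/-- F is Fréchet differentiable at E_x = (x♯, 0) with derivative
represented by the upper-triangular matrix
[[−δn·ln Q_x, b], [0, ν·ρw/Q_x − (ω+δw)]] where
b = −η·δn + (1−ν)·ρw/Q_x − δn·ln Q_x + ω; its eigenvalues are −δn·ln Q_x and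
(ω+δw)·(Q_y − Q_x)/Q_x, and they are strictly negative when Q_x > Q_y. -/
theorem jacobian_at_wolbachia_free_equilibrium
    (ρn ρw δn δw σ ν η ω : ℝ)
    (hρn : 0 < ρn) (hρw : 0 < ρw) (hδn : 0 < δn) (hδw : 0 < δw) (hσ : 0 < σ)
    (hν0 : 0 ≤ ν) (hν1 : ν ≤ 1) (hη0 : 0 ≤ η) (hη1 : η ≤ 1) (hω : 0 ≤ ω)
    (hQx : ρn / δn > 1) :
    HasFDerivAt
      (fun p : ℝ × ℝ => (F1 ρn ρw δn σ ν η ω p.1 p.2, F2 ρw δw σ ν ω p.1 p.2))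
      ((upperTriangular (-δn * Real.log (ρn / δn))
          (-η * δn + (1 - ν) * ρw / (ρn / δn) - δn * Real.log (ρn / δn) + ω)
          (ν * ρw / (ρn / δn) - (ω + δw))).toContinuousLinearMap)
      ((1 / σ) * Real.log (ρn / δn), 0) ∧
    Module.End.HasEigenvalue
      (upperTriangular (-δn * Real.log (ρn / δn))
        (-η * δn + (1 - ν) * ρw / (ρn / δn) - δn * Real.log (ρn / δn) + ω)
        (ν * ρw / (ρn / δn) - (ω + δw)))
      (-δn * Real.log (ρn / δn)) ∧
    Module.End.HasEigenvalue
      (upperTriangular (-δn * Real.log (ρn / δn))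
        (-η * δn + (1 - ν) * ρw / (ρn / δn) - δn * Real.log (ρn / δn) + ω)
        (ν * ρw / (ρn / δn) - (ω + δw)))
      ((ω + δw) * (ν * ρw / (ω + δw) - ρn / δn) / (ρn / δn)) ∧
    (ρn / δn > ν * ρw / (ω + δw) →
      -δn * Real.log (ρn / δn) < 0 ∧
      (ω + δw) * (ν * ρw / (ω + δw) - ρn / δn) / (ρn / δn) < 0) :=
  jacobian_at_wolbachia_free_equilibrium_general ρn ρw δn δw σ ν η ω hδn hδw hσ hω hQx
end

section
/- Let û : ℝ → ℝ be continuous and nonnegative, let m ≥ 1 and i ≥ 1 be integers, and for each integer n define Û_n = ⌈(û(n−1)+û(n))/2⌉ if ∫_{n−1}^{n} û ≤ (û(n−1)+û(n))/2, and Û_n = ⌈ sup_{t ∈ [n−1, n]} û(t) ⌉ otherwise. Define the m-periodic release size Û_{m,i} = Σ_{n=(i−1)m+1}^{im} Û_n and the excess-estimate release size Ũ_{m,i} = m·⌈ sup_{t ∈ [(i−1)m, im]} û(t) ⌉. Then Û_{m,i} ≤ Ũ_{m,i}; consequently Σ_i Û_{m,i} ≤ Σ_i Ũ_{m,i}, i.e.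 the excess-estimate m-periodic strategy requires at least as many released insects as the aggregated daily suboptimal impulses. -/
open Finset Set

lemma midpoint_le_csSup_image {α : Type*} {f : α → ℝ} {s : Set α} (hs : BddAbove (f '' s))
    {x y : α} (hx : x ∈ s) (hy : y ∈ s) : (f x + f y) / 2 ≤ sSup (f '' s) := by
  have hfx : f x ≤ sSup (f '' s) := le_csSup hs (mem_image_of_mem f hx)
  have hfy : f y ≤ sSup (f '' s) := le_csSup hs (mem_image_of_mem f hy)
  linarith

lemma csSup_image_mono {α : Type*} {f : α → ℝ} {s t : Set α} (ht : BddAbove (f '' t))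
    (hs : s.Nonempty) (hst : s ⊆ t) : sSup (f '' s) ≤ sSup (f '' t) :=
  csSup_le_csSup ht (hs.image f) (image_mono hst)

lemma Nat.card_Icc_pred_mul_add_one_mul (m i : ℕ) (hi : 1 ≤ i) :
    #(Finset.Icc ((i - 1) * m + 1) (i * m)) = m := by
  obtain ⟨k, rfl⟩ := Nat.exists_eq_add_of_le' hi
  rw [Nat.card_Icc, Nat.add_sub_cancel, add_mul, one_mul]
  omega

/-- The daily suboptimal impulse `Û_n`. -/
noncomputable def dailyImpulse (u : ℝ → ℝ) (n : ℕ) : ℝ :=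
  if (∫ t in ((n : ℝ) - 1)..(n : ℝ), u t) ≤ (u ((n : ℝ) - 1) + u (n : ℝ)) / 2
  then (⌈(u ((n : ℝ) - 1) + u (n : ℝ)) / 2⌉ : ℝ)
  else (⌈sSup (u '' Icc ((n : ℝ) - 1) (n : ℝ))⌉ : ℝ)

/-- The integral test plays no role: both candidate values of `Û_n` are bounded by the supremum
over any interval containing the day `[n - 1, n]`. -/
lemma dailyImpulse_le_ceil_sSup {u : ℝ → ℝ} {a b : ℝ} (hu : ContinuousOn u (Icc a b)) {n : ℕ}
    (ha : a ≤ n - 1) (hb : (n : ℝ) ≤ b) :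
    dailyImpulse u n ≤ ⌈sSup (u '' Icc a b)⌉ := by
  have hbdd : BddAbove (u '' Icc a b) := (isCompact_Icc.image_of_continuousOn hu).bddAbove
  have hday : Icc ((n : ℝ) - 1) n ⊆ Icc a b := Icc_subset_Icc ha hb
  have hleft : (n : ℝ) - 1 ∈ Icc ((n : ℝ) - 1) n := left_mem_Icc.mpr (by linarith)
  have hright : (n : ℝ) ∈ Icc ((n : ℝ) - 1) n := right_mem_Icc.mpr (by linarith)
  unfold dailyImpulse
  split_ifs
  · exact_mod_cast Int.ceil_le_ceil
      (midpoint_le_csSup_image hbdd (hday hleft) (hday hright))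
  · exact_mod_cast Int.ceil_le_ceil (csSup_image_mono hbdd ⟨_, hleft⟩ hday)

lemma sum_dailyImpulse_le {u : ℝ → ℝ} (hu : Continuous u) (m i : ℕ) (hi : 1 ≤ i) :
    ∑ n ∈ Finset.Icc ((i - 1) * m + 1) (i * m), dailyImpulse u n ≤
      (m : ℝ) * ⌈sSup (u '' Icc (((i : ℝ) - 1) * m) ((i : ℝ) * m))⌉ := by
  have hday : ∀ n ∈ Finset.Icc ((i - 1) * m + 1) (i * m),
      dailyImpulse u n ≤ ⌈sSup (u '' Icc (((i : ℝ) - 1) * m) ((i : ℝ) * m))⌉ := by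
    intro n hn
    obtain ⟨hlo, hhi⟩ := Finset.mem_Icc.mp hn
    have hlo' : (((i - 1 : ℕ) : ℝ)) * m + 1 ≤ n := by exact_mod_cast hlo
    rw [Nat.cast_sub hi, Nat.cast_one] at hlo'
    exact dailyImpulse_le_ceil_sSup hu.continuousOn (by linarith) (by exact_mod_cast hhi)
  simpa [Nat.card_Icc_pred_mul_add_one_mul m i hi] using Finset.sum_le_card_nsmul _ _ _ hday

theorem excess_estimate_dominates_aggregated_impulses_general
    (uh : ℝ → ℝ) (hc : Continuous uh)
    (m : ℕ)
    (Uhat : ℕ → ℝ)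
    (hU : ∀ n : ℕ, Uhat n =
      if (∫ t in ((n : ℝ) - 1)..(n : ℝ), uh t)
            ≤ (uh ((n : ℝ) - 1) + uh (n : ℝ)) / 2
      then (⌈(uh ((n : ℝ) - 1) + uh (n : ℝ)) / 2⌉ : ℝ)
      else (⌈sSup (uh '' Set.Icc ((n : ℝ) - 1) (n : ℝ))⌉ : ℝ)) :
    (∀ i : ℕ, 1 ≤ i →
      ∑ n ∈ Finset.Icc ((i - 1) * m + 1) (i * m), Uhat n ≤
        (m : ℝ) * (⌈sSup (uh '' Set.Icc (((i : ℝ) - 1) * m) ((i : ℝ) * m))⌉ : ℝ)) ∧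
    (∀ I : ℕ,
      ∑ i ∈ Finset.Icc 1 I, ∑ n ∈ Finset.Icc ((i - 1) * m + 1) (i * m), Uhat n ≤
        ∑ i ∈ Finset.Icc 1 I,
          (m : ℝ) * (⌈sSup (uh '' Set.Icc (((i : ℝ) - 1) * m) ((i : ℝ) * m))⌉ : ℝ)) := by
  obtain rfl : Uhat = dailyImpulse uh := funext hU
  have hperiod := sum_dailyImpulse_le hc m
  exact ⟨hperiod, fun I => sum_le_sum fun i hi => hperiod i (Finset.mem_Icc.mp hi).1⟩

/-- the excess-estimate m-periodic release size
Ũ_{m,i} = m·⌈sup_{[(i−1)m, im]} û⌉ dominates the aggregated daily suboptimal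
impulses Û_{m,i} = Σ_{n=(i−1)m+1}^{im} Û_n; consequently the same holds for
the totals over any range of periods i. -/
theorem excess_estimate_dominates_aggregated_impulses
    (uh : ℝ → ℝ) (hc : Continuous uh) (hnn : ∀ t, 0 ≤ uh t)
    (m : ℕ) (hm : 1 ≤ m)
    (Uhat : ℕ → ℝ)
    (hU : ∀ n : ℕ, Uhat n =
      if (∫ t in ((n : ℝ) - 1)..(n : ℝ), uh t)
            ≤ (uh ((n : ℝ) - 1) + uh (n : ℝ)) / 2
      then (⌈(uh ((n : ℝ) - 1) + uh (n : ℝ)) / 2⌉ : ℝ)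
      else (⌈sSup (uh '' Set.Icc ((n : ℝ) - 1) (n : ℝ))⌉ : ℝ)) :
    (∀ i : ℕ, 1 ≤ i →
      ∑ n ∈ Finset.Icc ((i - 1) * m + 1) (i * m), Uhat n ≤
        (m : ℝ) * (⌈sSup (uh '' Set.Icc (((i : ℝ) - 1) * m) ((i : ℝ) * m))⌉ : ℝ)) ∧
    (∀ I : ℕ,
      ∑ i ∈ Finset.Icc 1 I, ∑ n ∈ Finset.Icc ((i - 1) * m + 1) (i * m), Uhat n ≤
        ∑ i ∈ Finset.Icc 1 I,
          (m : ℝ) * (⌈sSup (uh '' Set.Icc (((i : ℝ) - 1) * m) ((i : ℝ) * m))⌉ : ℝ)) :=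
  excess_estimate_dominates_aggregated_impulses_general uh hc m Uhat hU
end
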